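/- For every natural number k ≥ 0 and every real number τ with 0 < τ ≤ 1, the iterated integral ∫_0^τ ( ∫_τ^1 [ (τ/t)·(1 - (1-t)^k) + (1-t)^k ] dt ) dβ equals τ·[ -τ·Σ_{i=1}^{k} C(k,i)·(-1)^i·(1 - τ^i)/i + (1-τ)^{k+1}/(k+1) ]. -/

import Mathlib

/-!
The integrand does not depend on `β`, so the outer integral is `τ` times the inner one. Inside,
`(τ / t) (1 - (1 - t) ^ k) = τ ∑_{i=1}^k C(k,i) (-1)^(i+1) t^(i-1)` by the binomial theorem, a
polynomial integrated term by term, while `(1 - t) ^ k` integrates to `(1 - τ) ^ (k + 1) / (k + 1)`.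
-/

open Finset MeasureTheory

theorem one_sub_one_sub_pow (k : ℕ) (t : ℝ) :
    1 - (1 - t) ^ k = -∑ i ∈ Icc 1 k, (k.choose i : ℝ) * (-1) ^ i * t ^ i := by
  rw [sub_eq_neg_add 1 t, add_pow, Nat.range_succ_eq_Icc_zero,
    ← insert_Icc_add_one_left_eq_Icc k.zero_le, sum_insert (by simp)]
  simp only [neg_pow t, one_pow, mul_one, pow_zero, Nat.choose_zero_right, Nat.cast_one,
    zero_add, sub_add_eq_sub_sub, sub_self, zero_sub]
  exact congrArg _ (sum_congr rfl fun i _ => by ring)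

-- Equality fails only at `t = 0`, where the left side is the junk value `0 / 0 = 0`.
theorem one_sub_one_sub_pow_div_ae_eq (k : ℕ) :
    (fun t : ℝ => (1 - (1 - t) ^ k) / t) =ᵐ[volume]
      fun t => -∑ i ∈ Icc 1 k, (k.choose i : ℝ) * (-1) ^ i * t ^ (i - 1) := by
  filter_upwards [volume.ae_ne 0] with t ht
  rw [one_sub_one_sub_pow, neg_div, sum_div]
  congr 1
  refine sum_congr rfl fun i hi => ?_
  rw [mul_div_assoc, pow_sub₀ _ ht (mem_Icc.mp hi).1, pow_one, div_eq_mul_inv]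

theorem integral_pow_sub_one {i : ℕ} (hi : 1 ≤ i) (a b : ℝ) :
    ∫ t in a..b, t ^ (i - 1) = (b ^ i - a ^ i) / i := by
  obtain ⟨j, rfl⟩ := Nat.exists_eq_add_of_le' hi
  simp [integral_pow]

theorem integral_one_sub_one_sub_pow_div (k : ℕ) (a b : ℝ) :
    ∫ t in a..b, (1 - (1 - t) ^ k) / t =
      -∑ i ∈ Icc 1 k, (k.choose i : ℝ) * (-1) ^ i * (b ^ i - a ^ i) / i := by
  rw [intervalIntegral.integral_congr_ae
      (ae_imp_of_ae_restrict (ae_restrict_of_ae (one_sub_one_sub_pow_div_ae_eq k))),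
    intervalIntegral.integral_neg, intervalIntegral.integral_finsetSum
      fun i _ => (by fun_prop : Continuous _).intervalIntegrable _ _]
  refine congrArg _ (sum_congr rfl fun i hi => ?_)
  rw [intervalIntegral.integral_const_mul, integral_pow_sub_one (mem_Icc.mp hi).1, mul_div_assoc]

theorem intervalIntegrable_one_sub_one_sub_pow_div (k : ℕ) (a b : ℝ) :
    IntervalIntegrable (fun t : ℝ => (1 - (1 - t) ^ k) / t) volume a b :=
  ((by fun_prop : Continuous _).intervalIntegrable a b).congr_ae
    (ae_restrict_of_ae (one_sub_one_sub_pow_div_ae_eq k).symm)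

theorem integral_one_sub_pow (k : ℕ) (a b : ℝ) :
    ∫ t in a..b, (1 - t) ^ k = ((1 - a) ^ (k + 1) - (1 - b) ^ (k + 1)) / (k + 1) := by
  rw [intervalIntegral.integral_comp_sub_left (fun t => t ^ k), integral_pow]

theorem stmt_9_general (k : ℕ) (τ : ℝ) :
    ∫ _β in (0:ℝ)..τ, (∫ t in τ..1, ((τ / t) * (1 - (1 - t) ^ k) + (1 - t) ^ k)) =
      τ * (-τ * (∑ i ∈ Finset.Icc 1 k,
            (k.choose i : ℝ) * (-1) ^ i * (1 - τ ^ i) / i)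
          + (1 - τ) ^ (k + 1) / (k + 1)) := by
  have inner_split : ∫ t in τ..1, ((τ / t) * (1 - (1 - t) ^ k) + (1 - t) ^ k) =
      τ * (∫ t in τ..1, (1 - (1 - t) ^ k) / t) + ∫ t in τ..1, (1 - t) ^ k := by
    simp_rw [div_mul_eq_mul_div, mul_div_assoc]
    rw [intervalIntegral.integral_add
        ((intervalIntegrable_one_sub_one_sub_pow_div k τ 1).const_mul τ)
        ((by fun_prop : Continuous fun t : ℝ => (1 - t) ^ k).intervalIntegrable τ 1),
      intervalIntegral.integral_const_mul]
  rw [intervalIntegral.integral_const, inner_split, integral_one_sub_one_sub_pow_div,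
    integral_one_sub_pow]
  simp only [one_pow, sub_self, sub_zero, smul_eq_mul]
  ring

theorem stmt_9 (k : ℕ) (τ : ℝ) (hτ : 0 < τ) (hτ1 : τ ≤ 1) :
    ∫ _β in (0:ℝ)..τ, (∫ t in τ..1, ((τ / t) * (1 - (1 - t) ^ k) + (1 - t) ^ k)) =
      τ * (-τ * (∑ i ∈ Finset.Icc 1 k,
            (k.choose i : ℝ) * (-1) ^ i * (1 - τ ^ i) / i)
          + (1 - τ) ^ (k + 1) / (k + 1)) :=
  stmt_9_general k τ
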